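/- Boundedness of the convective trilinear form on H¹₀-type fields (inequality (2.1)): Let d ∈ {2,3} and let Ω ⊂ ℝ^d be a bounded open set. There exists a constant C = C(Ω) > 0 such that for all C¹ vector fields u, v, w : ℝ^d → ℝ^d with compact support contained in Ω: |b(u,v,w)| ≤ C·‖∇u‖·‖∇v‖·‖∇w‖. -/

import Mathlib

open MeasureTheory Finset RealInnerProductSpace

noncomputable section

abbrev Euc (d : ℕ) := EuclideanSpace ℝ (Fin d)

def eb {d : ℕ} (i : Fin d) : Euc d := EuclideanSpace.single i 1

def frobInner {d : ℕ} (A B : Euc d →L[ℝ] Euc d) : ℝ :=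
  ∑ i : Fin d, ⟪A (eb i), B (eb i)⟫

def gradNorm {d : ℕ} (φ : Euc d → Euc d) : ℝ :=
  Real.sqrt (∫ x, frobInner (fderiv ℝ φ x) (fderiv ℝ φ x))

def triForm {d : ℕ} (u v w : Euc d → Euc d) : ℝ :=
  ∫ x, ⟪fderiv ℝ v x (u x), w x⟫

/-!
Pointwise `|⟨Dv u, w⟩| ≤ ‖Dv‖ ‖u‖ ‖w‖` and Hölder with exponents `(2, 4, 4)` give
`|b(u,v,w)| ≤ ‖Dv‖_{L²} ‖u‖_{L⁴} ‖w‖_{L⁴}`, and the operator norm is dominated by the Frobenius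
norm, so `‖Dv‖_{L²} ≤ ‖∇v‖`. For `d ≤ 3` and fields supported in the bounded set `Ω`, the
Gagliardo–Nirenberg–Sobolev inequality with `p = 12/7` followed by Hölder on `Ω` gives
`‖u‖_{L⁴} ≤ K ‖∇u‖`.
-/

open Module
open scoped ENNReal NNReal

theorem OrthonormalBasis.opNorm_le_sqrt_sum_sq {ι E F : Type*} [Fintype ι]
    [NormedAddCommGroup E] [InnerProductSpace ℝ E] [SeminormedAddCommGroup F] [NormedSpace ℝ F]
    (b : OrthonormalBasis ι ℝ E) (A : E →L[ℝ] F) :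
    ‖A‖ ≤ √(∑ i, ‖A (b i)‖ ^ 2) := by
  refine A.opNorm_le_bound (by positivity) fun x => ?_
  calc ‖A x‖ = ‖∑ i, ⟪b i, x⟫ • A (b i)‖ := by
        conv_lhs => rw [← b.sum_repr' x]
        simp only [map_sum, map_smul]
    _ ≤ ∑ i, |⟪b i, x⟫| * ‖A (b i)‖ := by
        refine norm_sum_le_of_le _ fun i _ => ?_
        rw [norm_smul, Real.norm_eq_abs]
    _ ≤ √(∑ i, |⟪b i, x⟫| ^ 2) * √(∑ i, ‖A (b i)‖ ^ 2) := Real.sum_mul_le_sqrt_mul_sqrt _ _ _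
    _ = √(∑ i, ‖A (b i)‖ ^ 2) * ‖x‖ := by
        simp_rw [sq_abs, b.sum_sq_inner_right, Real.sqrt_sq (norm_nonneg x), mul_comm]

theorem sq_opNorm_le_frobInner {d : ℕ} (A : Euc d →L[ℝ] Euc d) : ‖A‖ ^ 2 ≤ frobInner A A := by
  have hfrob : frobInner A A = ∑ i, ‖A (EuclideanSpace.basisFun (Fin d) ℝ i)‖ ^ 2 := by
    simp [frobInner, eb]
  rw [hfrob]
  exact (Real.le_sqrt (norm_nonneg _) (by positivity)).1
    ((EuclideanSpace.basisFun (Fin d) ℝ).opNorm_le_sqrt_sum_sq A)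

theorem eLpNorm_two_le_ofReal_sqrt_integral {α E : Type*} [MeasurableSpace α] {μ : Measure α}
    [NormedAddCommGroup E] {f : α → E} {F : α → ℝ} (hF : Integrable F μ)
    (hfF : ∀ x, ‖f x‖ ^ 2 ≤ F x) :
    eLpNorm f 2 μ ≤ ENNReal.ofReal √(∫ x, F x ∂μ) := by
  have hF0 : ∀ x, 0 ≤ F x := fun x => (sq_nonneg _).trans (hfF x)
  have hsqrt : MemLp (fun x => √(F x)) 2 μ := by
    refine (memLp_two_iff_integrable_sq hF.1.aemeasurable.sqrt.aestronglyMeasurable).2 ?_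
    simpa only [Real.sq_sqrt (hF0 _)] using hF
  calc eLpNorm f 2 μ ≤ eLpNorm (fun x => √(F x)) 2 μ :=
        eLpNorm_mono_real fun x => Real.le_sqrt_of_sq_le (hfF x)
    _ = ENNReal.ofReal √(∫ x, F x ∂μ) := by
        rw [← ofReal_lpNorm hsqrt,
          lpNorm_eq_integral_norm_rpow_toReal two_ne_zero ENNReal.ofNat_ne_top hsqrt.1]
        simp only [ENNReal.toReal_ofNat, Real.norm_eq_abs, Real.rpow_two, sq_abs,
          Real.sq_sqrt (hF0 _)]
        rw [Real.sqrt_eq_rpow, one_div]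

theorem gradNorm_nonneg {d : ℕ} (φ : Euc d → Euc d) : 0 ≤ gradNorm φ := Real.sqrt_nonneg _

theorem eLpNorm_fderiv_two_le_gradNorm {d : ℕ} {φ : Euc d → Euc d} (hφ : ContDiff ℝ 1 φ)
    (hφc : HasCompactSupport φ) :
    eLpNorm (fderiv ℝ φ) 2 volume ≤ ENNReal.ofReal (gradNorm φ) := by
  have hcont : Continuous fun x => frobInner (fderiv ℝ φ x) (fderiv ℝ φ x) := by
    have hDφ := hφ.continuous_fderiv one_ne_zero
    unfold frobInner
    fun_prop
  have hsupp : HasCompactSupport fun x => frobInner (fderiv ℝ φ x) (fderiv ℝ φ x) :=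
    (hφc.fderiv ℝ).comp_left (g := fun A => frobInner A A) (by simp [frobInner])
  exact eLpNorm_two_le_ofReal_sqrt_integral (hcont.integrable_of_hasCompactSupport hsupp)
    fun x => sq_opNorm_le_frobInner _

theorem eLpNorm_le_eLpNorm_mul_rpow_measure_of_support_subset {α E : Type*} [MeasurableSpace α]
    {μ : Measure α} [NormedAddCommGroup E] {f : α → E} {s : Set α} {p q : ℝ≥0∞} (hpq : p ≤ q)
    (hf : AEStronglyMeasurable f μ) (hfs : f.support ⊆ s) :
    eLpNorm f p μ ≤ eLpNorm f q μ * μ s ^ (1 / p.toReal - 1 / q.toReal) := by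
  calc eLpNorm f p μ = eLpNorm f p (μ.restrict s) :=
        (eLpNorm_restrict_eq_of_support_subset hfs).symm
    _ ≤ eLpNorm f q (μ.restrict s) * μ.restrict s Set.univ ^ (1 / p.toReal - 1 / q.toReal) :=
        eLpNorm_le_eLpNorm_mul_rpow_measure_univ hpq hf.restrict
    _ = eLpNorm f q μ * μ s ^ (1 / p.toReal - 1 / q.toReal) := by
        rw [eLpNorm_restrict_eq_of_support_subset hfs, Measure.restrict_apply_univ]

/- Gagliardo–Nirenberg–Sobolev from `W^{1,12/7}` into `L⁴`, valid since `12/7 < n` and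
`7/12 - 1/n ≤ 1/4`, then Hölder on `Ω` from `L²` down to `L^{12/7}` (costing `μ Ω ^ (1/12)`). -/
theorem exists_eLpNorm_four_le_mul_eLpNorm_fderiv_two {E F : Type*}
    [NormedAddCommGroup E] [NormedSpace ℝ E] [MeasurableSpace E] [BorelSpace E]
    [FiniteDimensional ℝ E] (μ : Measure E) [μ.IsAddHaarMeasure]
    [NormedAddCommGroup F] [NormedSpace ℝ F] [FiniteDimensional ℝ F]
    (hE : finrank ℝ E = 2 ∨ finrank ℝ E = 3) {Ω : Set E} (hΩ : Bornology.IsBounded Ω) :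
    ∃ K : ℝ≥0, ∀ u : E → F, ContDiff ℝ 1 u → tsupport u ⊆ Ω →
      eLpNorm u 4 μ ≤ K * eLpNorm (fderiv ℝ u) 2 μ := by
  set p : ℝ≥0 := 12 / 7
  set C := eLpNormLESNormFDerivOfLeConst F μ Ω p 4
  refine ⟨C * (μ Ω).toNNReal ^ (1 / 12 : ℝ), fun u hu huΩ => ?_⟩
  have hsobolev : eLpNorm u (4 : ℝ≥0) μ ≤ C * eLpNorm (fderiv ℝ u) p μ := by
    refine eLpNorm_le_eLpNorm_fderiv_of_le μ hu ((subset_tsupport u).trans huΩ) ?_ ?_ ?_ hΩ <;>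
      rcases hE with h | h <;>
      simp only [h, p, ← NNReal.coe_le_coe, ← NNReal.coe_lt_coe] <;> push_cast <;> norm_num
  have hholder : eLpNorm (fderiv ℝ u) p μ ≤ eLpNorm (fderiv ℝ u) 2 μ * μ Ω ^ (1 / 12 : ℝ) := by
    convert eLpNorm_le_eLpNorm_mul_rpow_measure_of_support_subset (q := 2) ?_
      (hu.continuous_fderiv one_ne_zero).aestronglyMeasurable
      ((support_fderiv_subset ℝ).trans huΩ) using 3
    · norm_num [p]
    · rw [← ENNReal.coe_ofNat, ENNReal.coe_le_coe, ← NNReal.coe_le_coe]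
      norm_num [p]
  calc eLpNorm u 4 μ = eLpNorm u (4 : ℝ≥0) μ := by norm_num
    _ ≤ C * (eLpNorm (fderiv ℝ u) 2 μ * μ Ω ^ (1 / 12 : ℝ)) := hsobolev.trans (by gcongr)
    _ = ↑(C * (μ Ω).toNNReal ^ (1 / 12 : ℝ)) * eLpNorm (fderiv ℝ u) 2 μ := by
        rw [ENNReal.coe_mul, ENNReal.coe_rpow_of_nonneg _ (by norm_num),
          ENNReal.coe_toNNReal hΩ.measure_lt_top.ne]
        ring

theorem eLpNorm_one_inner_apply_le {α E F : Type*} [MeasurableSpace α] {μ : Measure α}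
    [NormedAddCommGroup E] [NormedSpace ℝ E] [NormedAddCommGroup F] [InnerProductSpace ℝ F]
    {A : α → E →L[ℝ] F} {u : α → E} {w : α → F} (hA : AEStronglyMeasurable A μ)
    (hu : AEStronglyMeasurable u μ) (hw : AEStronglyMeasurable w μ) :
    eLpNorm (fun x => ⟪A x (u x), w x⟫) 1 μ ≤
      eLpNorm A 2 μ * (eLpNorm u 4 μ * eLpNorm w 4 μ) := by
  have holder {p q r : ℝ≥0∞} [p.HolderTriple q r] {f g : α → ℝ}
      (hf : AEStronglyMeasurable f μ) (hg : AEStronglyMeasurable g μ) :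
      eLpNorm (fun x => f x * g x) r μ ≤ eLpNorm f p μ * eLpNorm g q μ := by
    simpa using eLpNorm_le_eLpNorm_mul_eLpNorm'_of_norm hf hg (· * ·) 1
      (.of_forall fun x => by simp [norm_mul])
  have : ENNReal.HolderTriple 4 4 2 := .of_toReal ⟨by norm_num, by norm_num, by norm_num⟩
  calc eLpNorm (fun x => ⟪A x (u x), w x⟫) 1 μ
      ≤ eLpNorm (fun x => ‖A x‖ * (‖u x‖ * ‖w x‖)) 1 μ := by
        refine eLpNorm_mono_real fun x => ?_
        rw [Real.norm_eq_abs, ← mul_assoc]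
        exact (abs_real_inner_le_norm _ _).trans
          (mul_le_mul_of_nonneg_right ((A x).le_opNorm _) (norm_nonneg _))
    _ ≤ eLpNorm (fun x => ‖A x‖) 2 μ * eLpNorm (fun x => ‖u x‖ * ‖w x‖) 2 μ :=
        holder hA.norm (hu.norm.mul hw.norm)
    _ ≤ eLpNorm A 2 μ * (eLpNorm u 4 μ * eLpNorm w 4 μ) := by
        rw [eLpNorm_norm]
        gcongr
        simpa only [eLpNorm_norm] using holder (p := 4) (q := 4) hu.norm hw.norm

theorem enorm_triForm_le {d : ℕ} {u v w : Euc d → Euc d} (hu : Continuous u)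
    (hv : ContDiff ℝ 1 v) (hw : Continuous w) :
    ‖triForm u v w‖ₑ ≤
      eLpNorm (fderiv ℝ v) 2 volume * (eLpNorm u 4 volume * eLpNorm w 4 volume) :=
  calc ‖triForm u v w‖ₑ ≤ ∫⁻ x, ‖⟪fderiv ℝ v x (u x), w x⟫‖ₑ := enorm_integral_le_lintegral_enorm _
    _ = eLpNorm (fun x => ⟪fderiv ℝ v x (u x), w x⟫) 1 volume := eLpNorm_one_eq_lintegral_enorm.symm
    _ ≤ _ := eLpNorm_one_inner_apply_le (hv.continuous_fderiv one_ne_zero).aestronglyMeasurable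
        hu.aestronglyMeasurable hw.aestronglyMeasurable

theorem exists_eLpNorm_four_le_mul_gradNorm {d : ℕ} (hd : d = 2 ∨ d = 3) {Ω : Set (Euc d)}
    (hΩ : Bornology.IsBounded Ω) :
    ∃ K : ℝ≥0, ∀ φ : Euc d → Euc d, ContDiff ℝ 1 φ → HasCompactSupport φ → tsupport φ ⊆ Ω →
      eLpNorm φ 4 volume ≤ K * ENNReal.ofReal (gradNorm φ) := by
  obtain ⟨K, hK⟩ := exists_eLpNorm_four_le_mul_eLpNorm_fderiv_two (F := Euc d) volume
    (by simpa using hd) hΩ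
  exact ⟨K, fun φ hφ hcφ hsφ =>
    (hK φ hφ hsφ).trans (by gcongr; exact eLpNorm_fderiv_two_le_gradNorm hφ hcφ)⟩

theorem triForm_bound_general
    (d : ℕ) (hd : d = 2 ∨ d = 3)
    (Ω : Set (Euc d)) (hΩb : Bornology.IsBounded Ω) :
    ∃ C > 0, ∀ u v w : Euc d → Euc d,
      ContDiff ℝ 1 u → ContDiff ℝ 1 v → ContDiff ℝ 1 w →
      HasCompactSupport u → HasCompactSupport v → HasCompactSupport w →
      tsupport u ⊆ Ω → tsupport v ⊆ Ω → tsupport w ⊆ Ω →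
      |triForm u v w| ≤ C * gradNorm u * gradNorm v * gradNorm w := by
  obtain ⟨K, hK⟩ := exists_eLpNorm_four_le_mul_gradNorm hd hΩb
  refine ⟨K ^ 2 + 1, by positivity, fun u v w hu hv hw hcu hcv hcw hsu _ hsw => ?_⟩
  have hbound : ‖triForm u v w‖ₑ ≤ ENNReal.ofReal (gradNorm v) *
      (K * ENNReal.ofReal (gradNorm u) * (K * ENNReal.ofReal (gradNorm w))) :=
    (enorm_triForm_le hu.continuous hv hw.continuous).trans (by
      gcongr
      exacts [eLpNorm_fderiv_two_le_gradNorm hv hcv, hK u hu hcu hsu, hK w hw hcw hsw])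
  have hG : 0 ≤ gradNorm u * gradNorm v * gradNorm w :=
    mul_nonneg (mul_nonneg (gradNorm_nonneg u) (gradNorm_nonneg v)) (gradNorm_nonneg w)
  calc |triForm u v w| = ‖triForm u v w‖ₑ.toReal := by rw [toReal_enorm, Real.norm_eq_abs]
    _ ≤ K ^ 2 * (gradNorm u * gradNorm v * gradNorm w) := by
        refine (ENNReal.toReal_mono (by finiteness) hbound).trans_eq ?_
        simp only [ENNReal.toReal_mul, ENNReal.toReal_ofReal (gradNorm_nonneg _),
          ENNReal.coe_toReal]
        ring
    _ ≤ (K ^ 2 + 1) * (gradNorm u * gradNorm v * gradNorm w) := by gcongr; linarith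
    _ = (K ^ 2 + 1) * gradNorm u * gradNorm v * gradNorm w := by ring

/-- Boundedness of the convective trilinear form on `H¹₀`-type fields (inequality (2.1)). -/
theorem triForm_bound
    (d : ℕ) (hd : d = 2 ∨ d = 3)
    (Ω : Set (Euc d)) (hΩo : IsOpen Ω) (hΩb : Bornology.IsBounded Ω) :
    ∃ C > 0, ∀ u v w : Euc d → Euc d,
      ContDiff ℝ 1 u → ContDiff ℝ 1 v → ContDiff ℝ 1 w →
      HasCompactSupport u → HasCompactSupport v → HasCompactSupport w →
      tsupport u ⊆ Ω → tsupport v ⊆ Ω → tsupport w ⊆ Ω →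
      |triForm u v w| ≤ C * gradNorm u * gradNorm v * gradNorm w :=
  triForm_bound_general d hd Ω hΩb
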